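/- Let b, b̄ be positive sequences of length m, θ⁰ ∈ ℝ^m satisfy Σ_k b_k^{-2}(b̄_k - b_k)²(θ⁰_k)² > C₂ ρ² where ρ² = ε²(Σ_k b_k^{-4})^{1/2}, and define θ by b_kθ_k = b̄_kθ⁰_k + ω_k τ R b̄_k^{-1}/(Σ_j b̄_j^{-4})^{1/2} with signs ω_k ∈ {±1}, τ ∈ (0,1], R² = c·ε²(Σ_j b̄_j^{-4})^{1/2} for some c > 0. Then for every γ ∈ (0,1), Σ_{k=1}^m (θ_k - θ⁰_k)² ≥ ((1-γ)C₂ + (1-γ⁻¹)τ²c) · ρ². -/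

import Mathlib

/-!
Write `θ_k - θ⁰_k = p_k + q_k` with `p_k = b_k⁻¹ (b̄_k - b_k) θ⁰_k` the signal part and
`q_k` the perturbation. The inequality `(a + e)² ≥ (1 - γ) a² + (1 - γ⁻¹) e²` bounds
`‖θ - θ⁰‖²` below by `(1 - γ) ‖p‖² + (1 - γ⁻¹) ‖q‖²`. The first term is controlled by the
non-homogeneity of `θ⁰`; since `1 - γ⁻¹ < 0`, the second needs an upper bound on `‖q‖²`, which
Cauchy–Schwarz on `∑ b_k⁻² b̄_k⁻²` provides.
-/

open Finset

lemma one_sub_mul_sq_add_one_sub_inv_mul_sq_le_add_sq {γ : ℝ} (hγ : 0 < γ) (a e : ℝ) :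
    (1 - γ) * a ^ 2 + (1 - γ⁻¹) * e ^ 2 ≤ (a + e) ^ 2 := by
  have gap : (a + e) ^ 2 - ((1 - γ) * a ^ 2 + (1 - γ⁻¹) * e ^ 2) = γ⁻¹ * (γ * a + e) ^ 2 := by
    field_simp
    ring
  have : 0 ≤ γ⁻¹ * (γ * a + e) ^ 2 := by positivity
  linarith

lemma Finset.one_sub_mul_sum_sq_add_one_sub_inv_mul_sum_sq_le {ι : Type*} (s : Finset ι)
    {γ : ℝ} (hγ : 0 < γ) (p q : ι → ℝ) :
    (1 - γ) * ∑ i ∈ s, p i ^ 2 + (1 - γ⁻¹) * ∑ i ∈ s, q i ^ 2 ≤ ∑ i ∈ s, (p i + q i) ^ 2 := by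
  rw [mul_sum, mul_sum, ← sum_add_distrib]
  exact sum_le_sum fun i _ ↦ one_sub_mul_sq_add_one_sub_inv_mul_sq_le_add_sq hγ (p i) (q i)

lemma Real.sum_sq_mul_sq_le_sqrt_mul_sqrt {ι : Type*} (s : Finset ι) (u v : ι → ℝ) :
    ∑ i ∈ s, u i ^ 2 * v i ^ 2 ≤ √(∑ i ∈ s, u i ^ 4) * √(∑ i ∈ s, v i ^ 4) := by
  convert Real.sum_mul_le_sqrt_mul_sqrt s (u · ^ 2) (v · ^ 2) using 4 <;> ring

lemma sum_sq_div_sqrt_mul_inv_mul_inv_le {ι : Type*} [Fintype ι] (b bbar ω : ι → ℝ)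
    (hω : ∀ k, ω k ^ 2 ≤ 1) (A : ℝ) :
    ∑ k, (A / √(∑ j, (bbar j)⁻¹ ^ 4) * (ω k * ((b k)⁻¹ * (bbar k)⁻¹))) ^ 2
      ≤ A ^ 2 * √(∑ k, (b k)⁻¹ ^ 4) / √(∑ j, (bbar j)⁻¹ ^ 4) := by
  set S := √(∑ j, (bbar j)⁻¹ ^ 4)
  calc ∑ k, (A / S * (ω k * ((b k)⁻¹ * (bbar k)⁻¹))) ^ 2
      ≤ ∑ k, (A / S) ^ 2 * ((b k)⁻¹ ^ 2 * (bbar k)⁻¹ ^ 2) := sum_le_sum fun k _ ↦ by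
        rw [show (A / S * (ω k * ((b k)⁻¹ * (bbar k)⁻¹))) ^ 2
          = (A / S) ^ 2 * ((b k)⁻¹ ^ 2 * (bbar k)⁻¹ ^ 2) * ω k ^ 2 by ring]
        exact mul_le_of_le_one_right (by positivity) (hω k)
    _ ≤ (A / S) ^ 2 * (√(∑ k, (b k)⁻¹ ^ 4) * S) := by
        rw [← mul_sum]
        gcongr
        exact Real.sum_sq_mul_sq_le_sqrt_mul_sqrt _ _ _
    _ = A ^ 2 * √(∑ k, (b k)⁻¹ ^ 4) / S := by
        rcases eq_or_ne S 0 with hS | hS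
        · simp [hS]
        · field_simp

theorem perturbed_signal_separation_general {m : ℕ}
    (b bbar θ θ0 : Fin m → ℝ) (ω : Fin m → ℝ) (τ R ε C₂ c : ℝ)
    (hb : ∀ k, 0 < b k)
    (hω : ∀ k, ω k = 1 ∨ ω k = -1)
    (hR : 0 < R)
    (hR2 : R ^ 2 = c * ε ^ 2 * Real.sqrt (∑ j, (bbar j)⁻¹ ^ 4))
    (hsep : ∑ k, (b k)⁻¹ ^ 2 * (bbar k - b k) ^ 2 * θ0 k ^ 2
      > C₂ * (ε ^ 2 * Real.sqrt (∑ k, (b k)⁻¹ ^ 4)))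
    (hθ : ∀ k, b k * θ k
      = bbar k * θ0 k + ω k * (τ * R * (bbar k)⁻¹ / Real.sqrt (∑ j, (bbar j)⁻¹ ^ 4))) :
    ∀ γ : ℝ, γ ∈ Set.Ioo (0 : ℝ) 1 →
      ∑ k, (θ k - θ0 k) ^ 2
        ≥ ((1 - γ) * C₂ + (1 - γ⁻¹) * τ ^ 2 * c)
            * (ε ^ 2 * Real.sqrt (∑ k, (b k)⁻¹ ^ 4)) := by
  rintro γ ⟨hγ0, hγ1⟩
  set Sb := √(∑ k, (b k)⁻¹ ^ 4)
  set Sbb := √(∑ j, (bbar j)⁻¹ ^ 4)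
  have hSbb : Sbb ≠ 0 := by
    rintro h
    rw [h, mul_zero] at hR2
    exact (pow_pos hR 2).ne' hR2
  set p : Fin m → ℝ := fun k ↦ (b k)⁻¹ * ((bbar k - b k) * θ0 k)
  set q : Fin m → ℝ := fun k ↦ τ * R / Sbb * (ω k * ((b k)⁻¹ * (bbar k)⁻¹))
  have hdecomp : ∀ k, θ k - θ0 k = p k + q k := by
    intro k
    have hbk := (hb k).ne'
    calc θ k - θ0 k = (b k)⁻¹ * (b k * θ k - b k * θ0 k) := by field_simp
      _ = p k + q k := by
        rw [hθ k]
        ring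
  have hp : ∑ k, p k ^ 2 = ∑ k, (b k)⁻¹ ^ 2 * (bbar k - b k) ^ 2 * θ0 k ^ 2 :=
    sum_congr rfl fun k _ ↦ by ring
  have hq : ∑ k, q k ^ 2 ≤ τ ^ 2 * c * ε ^ 2 * Sb :=
    calc ∑ k, q k ^ 2 ≤ (τ * R) ^ 2 * Sb / Sbb :=
          sum_sq_div_sqrt_mul_inv_mul_inv_le b bbar ω
            (fun k ↦ by rcases hω k with h | h <;> norm_num [h]) (τ * R)
      _ = τ ^ 2 * c * ε ^ 2 * Sb := by
          rw [mul_pow, hR2]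
          field_simp
  have hγinv : 1 - γ⁻¹ ≤ 0 := sub_nonpos.2 ((one_le_inv₀ hγ0).2 hγ1.le)
  calc ∑ k, (θ k - θ0 k) ^ 2 = ∑ k, (p k + q k) ^ 2 := sum_congr rfl fun k _ ↦ by rw [hdecomp]
    _ ≥ (1 - γ) * ∑ k, p k ^ 2 + (1 - γ⁻¹) * ∑ k, q k ^ 2 :=
        univ.one_sub_mul_sum_sq_add_one_sub_inv_mul_sum_sq_le hγ0 p q
    _ ≥ (1 - γ) * (C₂ * (ε ^ 2 * Sb)) + (1 - γ⁻¹) * (τ ^ 2 * c * ε ^ 2 * Sb) := by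
        rw [hp]
        exact add_le_add (mul_le_mul_of_nonneg_left hsep.le (by linarith))
          (mul_le_mul_of_nonpos_left hq hγinv)
    _ = ((1 - γ) * C₂ + (1 - γ⁻¹) * τ ^ 2 * c) * (ε ^ 2 * Sb) := by ring

theorem perturbed_signal_separation {m : ℕ} (hm : 0 < m)
    (b bbar θ θ0 : Fin m → ℝ) (ω : Fin m → ℝ) (τ R ε C₂ c : ℝ)
    (hb : ∀ k, 0 < b k) (hbbar : ∀ k, 0 < bbar k)
    (hω : ∀ k, ω k = 1 ∨ ω k = -1)
    (hτ : τ ∈ Set.Ioc (0 : ℝ) 1) (hR : 0 < R) (hε : 0 < ε) (hc : 0 < c)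
    (hR2 : R ^ 2 = c * ε ^ 2 * Real.sqrt (∑ j, (bbar j)⁻¹ ^ 4))
    (hsep : ∑ k, (b k)⁻¹ ^ 2 * (bbar k - b k) ^ 2 * θ0 k ^ 2
      > C₂ * (ε ^ 2 * Real.sqrt (∑ k, (b k)⁻¹ ^ 4)))
    (hθ : ∀ k, b k * θ k
      = bbar k * θ0 k + ω k * (τ * R * (bbar k)⁻¹ / Real.sqrt (∑ j, (bbar j)⁻¹ ^ 4))) :
    ∀ γ : ℝ, γ ∈ Set.Ioo (0 : ℝ) 1 →
      ∑ k, (θ k - θ0 k) ^ 2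
        ≥ ((1 - γ) * C₂ + (1 - γ⁻¹) * τ ^ 2 * c)
            * (ε ^ 2 * Real.sqrt (∑ k, (b k)⁻¹ ^ 4)) :=
  perturbed_signal_separation_general b bbar θ θ0 ω τ R ε C₂ c hb hω hR hR2 hsep hθ
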